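/- arXiv:1512.03017 — 2 statements merged into one kernel-verified Lean document; each statement's English description precedes it below -/
import Mathlib

section
/- Let G be a Noetherian group. Then G ⊗ G is Noetherian if and only if the Schur multiplier M(G) is finitely generated. -/
universe u

/-- Two groups acting on each other (and on themselves by conjugation) with
compatible actions, in the sense of Brown–Loday. -/
structure CompatibleActions (G H : Type u) [Group G] [Group H] where
  actG : G →* MulAut H
  actH : H →* MulAut G
  compat_left : ∀ (g g' : G) (h : H),
    actH (actG g h) g' = g * actH h (g⁻¹ * g' * g) * g⁻¹
  compat_right : ∀ (g : G) (h h' : H),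
    actG (actH h g) h' = h * actG g (h⁻¹ * h' * h) * h⁻¹

variable {G H : Type u} [Group G] [Group H]

/-- The defining relators of the non-abelian tensor product `G ⊗ H`. -/
def tensorRels (c : CompatibleActions G H) : Set (FreeGroup (G × H)) :=
  {r | ∃ g g' h, r = FreeGroup.of (g * g', h) *
      (FreeGroup.of (g * g' * g⁻¹, c.actG g h) * FreeGroup.of (g, h))⁻¹} ∪
  {r | ∃ g h h', r = FreeGroup.of (g, h * h') *
      (FreeGroup.of (g, h) * FreeGroup.of (c.actH h g, h * h' * h⁻¹))⁻¹}

/-- The non-abelian tensor product `G ⊗ H` of groups acting compatibly on each other. -/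
def NATensor (c : CompatibleActions G H) : Type u :=
  PresentedGroup (tensorRels c)

instance (c : CompatibleActions G H) : Group (NATensor c) := by
  unfold NATensor; infer_instance

/-- The generator `g ⊗ h` of the non-abelian tensor product. -/
def tmul (c : CompatibleActions G H) (g : G) (h : H) : NATensor c :=
  PresentedGroup.of (g, h)

/-- Conjugation actions of a group on itself form compatible actions. -/
def conjActions (G : Type u) [Group G] : CompatibleActions G G where
  actG := MulAut.conj
  actH := MulAut.conj
  compat_left := by intros; simp only [MulAut.conj_apply]; group
  compat_right := by intros; simp only [MulAut.conj_apply]; group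

/-- The non-abelian tensor square `G ⊗ G`. -/
def TensorSquare (G : Type u) [Group G] : Type u := NATensor (conjActions G)

instance (G : Type u) [Group G] : Group (TensorSquare G) := by
  unfold TensorSquare; infer_instance

/-- The derivative subgroup `D_H(G) = ⟨g ⬝ (ʰg)⁻¹ : g ∈ G, h ∈ H⟩ ≤ G`. -/
def derivSubgroupG (c : CompatibleActions G H) : Subgroup G :=
  Subgroup.closure {x | ∃ (g : G) (h : H), x = g * (c.actH h g)⁻¹}

/-- The derivative subgroup `D_G(H) = ⟨h ⬝ (ᵍh)⁻¹ : g ∈ G, h ∈ H⟩ ≤ H`. -/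
def derivSubgroupH (c : CompatibleActions G H) : Subgroup H :=
  Subgroup.closure {x | ∃ (g : G) (h : H), x = h * (c.actG g h)⁻¹}
/-- The defining relators of the non-abelian exterior square `G ∧ G`. -/
def exteriorRels (G : Type u) [Group G] : Set (FreeGroup (G × G)) :=
  tensorRels (conjActions G) ∪ {r | ∃ g : G, r = FreeGroup.of (g, g)}

/-- The non-abelian exterior square `G ∧ G`. -/
def ExteriorSquare (G : Type u) [Group G] : Type u :=
  PresentedGroup (exteriorRels G)

instance (G : Type u) [Group G] : Group (ExteriorSquare G) := by
  unfold ExteriorSquare; infer_instance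

/-- The generator `x ∧ y` of the non-abelian exterior square. -/
def wedge {G : Type u} [Group G] (x y : G) : ExteriorSquare G :=
  PresentedGroup.of (x, y)

open scoped commutatorElement

/-- The commutator homomorphism `κ : G ∧ G →* G`, `x ∧ y ↦ [x,y]`. -/
def exteriorComm (G : Type u) [Group G] : ExteriorSquare G →* G :=
  PresentedGroup.toGroup (f := fun p : G × G => ⁅p.1, p.2⁆) (by
    rintro r hr
    simp only [exteriorRels, tensorRels, Set.mem_union, Set.mem_setOf_eq] at hr
    rcases hr with ((⟨g, g', h, rfl⟩ | ⟨g, h, h', rfl⟩) | ⟨g, rfl⟩) <;>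
      simp only [map_mul, map_inv, FreeGroup.lift_apply_of, conjActions, MulAut.conj_apply,
        commutatorElement_def] <;> group)

/-- The Schur multiplier `M(G)`, realised as the kernel of `κ : G ∧ G →* G`. -/
def SchurMultiplier (G : Type u) [Group G] : Subgroup (ExteriorSquare G) :=
  (exteriorComm G).ker

/-- The subgroup `M₀(G) ≤ G ∧ G` generated by the `x ∧ y` with `[x,y] = 1`. -/
def M0 (G : Type u) [Group G] : Subgroup (ExteriorSquare G) :=
  Subgroup.closure {z | ∃ x y : G, ⁅x, y⁆ = 1 ∧ z = wedge x y}
/-- A group is supersolvable if it has a finite chain of subgroups, each normal in the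
whole group, reaching from `⊥` to `⊤`, with all successive factors cyclic. -/
def IsSupersolvable (G : Type u) [Group G] : Prop :=
  ∃ (n : ℕ) (s : ℕ → Subgroup G), s 0 = ⊥ ∧ s n = ⊤ ∧
    (∀ i, s i ≤ s (i + 1)) ∧ (∀ i, (s i).Normal) ∧
    ∀ i, ∃ x ∈ s (i + 1), ∀ y ∈ s (i + 1), ∃ k : ℤ, (x ^ k)⁻¹ * y ∈ s i

/-- A group is Noetherian if all of its subgroups are finitely generated. -/
def IsNoetherianGroup (G : Type u) [Group G] : Prop :=
  ∀ K : Subgroup G, K.FG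

/-- A group is solvable-by-finite if it has a solvable normal subgroup of finite index. -/
def SolvableByFinite (G : Type u) [Group G] : Prop :=
  ∃ S : Subgroup G, S.Normal ∧ IsSolvable S ∧ Finite (G ⧸ S)

/-- A group is nilpotent-by-finite if it has a nilpotent normal subgroup of finite index. -/
def NilpotentByFinite (G : Type u) [Group G] : Prop :=
  ∃ S : Subgroup G, S.Normal ∧ Group.IsNilpotent S ∧ Finite (G ⧸ S)

/-- The class `𝒞` of groups which are an extension of a finite group by a finitely
generated non-abelian free group, or an extension of a finitely generated non-abelian
free group by a finite group. -/
def ClassC (G : Type u) [Group G] : Prop :=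
  (∃ (n : ℕ) (π : G →* FreeGroup (Fin n)), 2 ≤ n ∧ Function.Surjective π ∧
      Finite π.ker) ∨
  (∃ (F : Subgroup G) (n : ℕ), F.Normal ∧ 2 ≤ n ∧ Nonempty (F ≃* FreeGroup (Fin n)) ∧
      Finite (G ⧸ F))

/-- `n`-chains of the inhomogeneous bar complex computing the integral homology of `G`:
the free `ℤ`-module on `n`-tuples of elements of `G`. -/
def barChains (G : Type u) [Group G] (n : ℕ) : Type u := (Fin n → G) →₀ ℤ

noncomputable instance (G : Type u) [Group G] (n : ℕ) : AddCommGroup (barChains G n) := by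
  unfold barChains; infer_instance

noncomputable instance (G : Type u) [Group G] (n : ℕ) : Module ℤ (barChains G n) := by
  unfold barChains; infer_instance

/-- The boundary map `∂ : C_{n+1} → C_n` of the inhomogeneous bar complex (with trivial
`ℤ` coefficients). -/
noncomputable def barBoundary (G : Type u) [Group G] (n : ℕ) :
    barChains G (n + 1) →ₗ[ℤ] barChains G n :=
  Finsupp.lift (barChains G n) ℤ (Fin (n + 1) → G) fun g =>
    Finsupp.single (Fin.tail g) 1
    + (∑ i : Fin n, ((-1 : ℤ) ^ ((i : ℕ) + 1)) •
        Finsupp.single (fun j : Fin n =>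
          if (j : ℕ) < (i : ℕ) then g (Fin.castSucc j)
          else if (j : ℕ) = (i : ℕ) then g (Fin.castSucc j) * g (Fin.succ j)
          else g (Fin.succ j)) (1 : ℤ))
    + ((-1 : ℤ) ^ (n + 1)) • Finsupp.single (Fin.init g) 1

/-- The `n`-th integral homology group `H_n(G)` (for `n ≥ 1`), computed from the
inhomogeneous bar complex: `ker ∂ₙ / im ∂ₙ₊₁`. -/
noncomputable def GroupHomology (G : Type u) [Group G] (n : ℕ) : Type u :=
  ↥(LinearMap.ker (barBoundary G (n - 1))) ⧸
    Submodule.comap (LinearMap.ker (barBoundary G (n - 1))).subtype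
      (LinearMap.range (barBoundary G (n - 1 + 1)))

namespace NTaux

open Subgroup

variable {G : Type u} [Group G]

abbrev TT (G : Type u) [Group G] : Type u := NATensor (conjActions G)

def tt (g h : G) : TT G := tmul (conjActions G) g h

lemma mk_rel {r : FreeGroup (G × G)} (hr : r ∈ tensorRels (conjActions G)) :
    PresentedGroup.mk (tensorRels (conjActions G)) r = 1 := by
  have h : r ∈ Subgroup.normalClosure (tensorRels (conjActions G)) :=
    Subgroup.subset_normalClosure hr
  exact (QuotientGroup.eq_one_iff r).mpr h

lemma tt_def (g h : G) :
    tt g h = PresentedGroup.mk (tensorRels (conjActions G)) (FreeGroup.of (g, h)) := rfl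

lemma relA (g x h : G) : tt (g * x) h = tt (g * x * g⁻¹) (g * h * g⁻¹) * tt g h := by
  have hr : FreeGroup.of (g * x, h) *
      (FreeGroup.of (g * x * g⁻¹, (conjActions G).actG g h) * FreeGroup.of (g, h))⁻¹
      ∈ tensorRels (conjActions G) := Or.inl ⟨g, x, h, rfl⟩
  have h1 := mk_rel hr
  rw [map_mul, map_inv, mul_inv_eq_one] at h1
  rw [map_mul] at h1
  simp only [conjActions, MulAut.conj_apply, map_mul, tt_def] at h1 ⊢
  exact h1

lemma relB (g h y : G) : tt g (h * y) = tt g h * tt (h * g * h⁻¹) (h * y * h⁻¹) := by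
  have hr : FreeGroup.of (g, h * y) *
      (FreeGroup.of (g, h) * FreeGroup.of ((conjActions G).actH h g, h * y * h⁻¹))⁻¹
      ∈ tensorRels (conjActions G) := Or.inr ⟨g, h, y, rfl⟩
  have h1 := mk_rel hr
  rw [map_mul, map_inv, mul_inv_eq_one] at h1
  rw [map_mul] at h1
  simp only [conjActions, MulAut.conj_apply, map_mul, tt_def] at h1 ⊢
  exact h1

lemma hom_ext {H : Type*} [Group H] {φ ψ : TT G →* H}
    (h : ∀ x y : G, φ (tt x y) = ψ (tt x y)) : φ = ψ :=
  PresentedGroup.ext fun ⟨x, y⟩ => h x y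

/-- The diagonal conjugation action on the tensor square. -/
def phi (a : G) : TT G →* TT G :=
  PresentedGroup.toGroup (f := fun p : G × G => tt (a * p.1 * a⁻¹) (a * p.2 * a⁻¹)) (by
    rintro r (⟨g, x, h, rfl⟩ | ⟨g, h, y, rfl⟩) <;>
      simp only [map_mul, map_inv, FreeGroup.lift_apply_of, conjActions, MulAut.conj_apply,
        mul_inv_eq_one]
    · have := relA (a * g * a⁻¹) (a * x * a⁻¹) (a * h * a⁻¹)
      have e1 : a * (g * x) * a⁻¹ = a * g * a⁻¹ * (a * x * a⁻¹) := by group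
      have e2 : a * (g * x * g⁻¹) * a⁻¹ =
          a * g * a⁻¹ * (a * x * a⁻¹) * (a * g * a⁻¹)⁻¹ := by group
      have e3 : a * (g * h * g⁻¹) * a⁻¹ =
          a * g * a⁻¹ * (a * h * a⁻¹) * (a * g * a⁻¹)⁻¹ := by group
      rw [e1, e2, e3]; exact this
    · have := relB (a * g * a⁻¹) (a * h * a⁻¹) (a * y * a⁻¹)
      have e1 : a * (h * y) * a⁻¹ = a * h * a⁻¹ * (a * y * a⁻¹) := by group
      have e2 : a * (h * g * h⁻¹) * a⁻¹ =
          a * h * a⁻¹ * (a * g * a⁻¹) * (a * h * a⁻¹)⁻¹ := by group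
      have e3 : a * (h * y * h⁻¹) * a⁻¹ =
          a * h * a⁻¹ * (a * y * a⁻¹) * (a * h * a⁻¹)⁻¹ := by group
      rw [e1, e2, e3]; exact this)

@[simp] lemma phi_tt (a g h : G) :
    phi a (tt g h) = tt (a * g * a⁻¹) (a * h * a⁻¹) :=
  PresentedGroup.toGroup.of _

lemma phi_phi (a b : G) (z : TT G) : phi a (phi b z) = phi (a * b) z := by
  have : (phi a).comp (phi b) = phi (a * b) := by
    apply hom_ext; intro x y
    simp only [MonoidHom.comp_apply, phi_tt]
    congr 1 <;> group
  exact DFunLike.congr_fun this z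

lemma phi_one (z : TT G) : phi (1 : G) z = z := by
  have : phi (1 : G) = MonoidHom.id (TT G) := by
    apply hom_ext; intro x y
    simp only [phi_tt, MonoidHom.id_apply, one_mul, inv_one, mul_one]
  rw [this]; rfl

/-- The commutator homomorphism `λ : G ⊗ G →* G`. -/
def lam : TT G →* G :=
  PresentedGroup.toGroup (f := fun p : G × G => ⁅p.1, p.2⁆) (by
    rintro r (⟨g, x, h, rfl⟩ | ⟨g, h, y, rfl⟩) <;>
      simp only [map_mul, map_inv, FreeGroup.lift_apply_of, conjActions, MulAut.conj_apply,
        commutatorElement_def] <;> group)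

@[simp] lemma lam_tt (g h : G) : lam (tt g h) = ⁅g, h⁆ :=
  PresentedGroup.toGroup.of _

lemma lam_phi (a : G) (z : TT G) : lam (phi a z) = a * lam z * a⁻¹ := by
  have h : lam.comp (phi a) =
      ((MulAut.conj a).toMonoidHom : G →* G).comp lam := by
    apply hom_ext; intro x y
    simp only [MonoidHom.comp_apply, phi_tt, lam_tt, MulEquiv.coe_toMonoidHom,
      MulAut.conj_apply, commutatorElement_def]
    group
  have := DFunLike.congr_fun h z
  simpa using this

lemma tt_induction {P : TT G → Prop} (one : P 1) (gen : ∀ x y : G, P (tt x y))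
    (mul : ∀ u v, P u → P v → P (u * v)) (inv : ∀ u, P u → P u⁻¹) : ∀ z, P z := by
  intro z
  induction z using PresentedGroup.induction_on with
  | H w =>
    induction w using FreeGroup.induction_on with
    | C1 => exact one
    | of p => exact gen p.1 p.2
    | inv_of p h => rw [map_inv]; exact inv _ h
    | mul v w hv hw => rw [map_mul]; exact mul _ _ hv hw

lemma tt_one_left (h : G) : tt (1 : G) h = 1 := by
  have := relA (1 : G) 1 h
  simp only [one_mul, mul_one, inv_one] at this
  exact right_eq_mul.mp this

end NTaux
namespace NTaux

variable {G : Type u} [Group G]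

lemma tt_one_right (g : G) : tt g (1 : G) = 1 := by
  have := relB g (1 : G) 1
  simp only [one_mul, mul_one, inv_one] at this
  exact left_eq_mul.mp this

lemma relA' (g x h : G) : tt (g * x) h = phi g (tt x h) * tt g h := by
  rw [phi_tt]; exact relA g x h

lemma relB' (g h y : G) : tt g (h * y) = tt g h * phi h (tt g y) := by
  rw [phi_tt]; exact relB g h y

lemma inv_left' (g h : G) : phi g (tt g⁻¹ h) = (tt g h)⁻¹ := by
  have := relA' g g⁻¹ h
  rw [mul_inv_cancel, tt_one_left] at this
  exact (eq_inv_of_mul_eq_one_left this.symm)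

lemma inv_right' (g h : G) : phi h (tt g h⁻¹) = (tt g h)⁻¹ := by
  have := relB' g h h⁻¹
  rw [mul_inv_cancel, tt_one_right] at this
  exact (eq_inv_of_mul_eq_one_right this.symm)

lemma interchange (g h x y : G) :
    phi (g * h) (tt x y) * tt g h = tt g h * phi (h * g) (tt x y) := by
  have W1 : tt (g * x) (h * y) =
      phi g (tt x h) * (phi (g * h) (tt x y) * (tt g h * phi h (tt g y))) := by
    rw [relA' g x (h * y), relB' x h y, relB' g h y, map_mul, ← phi_phi g h]
    simp only [mul_assoc]
  have W2 : tt (g * x) (h * y) =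
      phi g (tt x h) * (tt g h * (phi (h * g) (tt x y) * phi h (tt g y))) := by
    rw [relB' (g * x) h y, relA' g x h, relA' g x y, map_mul, ← phi_phi h g]
    simp only [mul_assoc]
  have := W1.symm.trans W2
  have h1 := mul_left_cancel this
  have h2 : (phi (g * h) (tt x y) * tt g h) * phi h (tt g y) =
      (tt g h * phi (h * g) (tt x y)) * phi h (tt g y) := by
    simpa only [mul_assoc] using h1
  exact mul_right_cancel h2

lemma interchange_all (g h : G) (z : TT G) :
    phi (g * h) z * tt g h = tt g h * phi (h * g) z := by
  have key : ((MulAut.conj (tt g h)).symm.toMonoidHom).comp (phi (g * h)) = phi (h * g) := by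
    apply hom_ext; intro x y
    simp only [MonoidHom.comp_apply, MulEquiv.coe_toMonoidHom, MulAut.conj_symm_apply]
    have := interchange g h x y
    calc (tt g h)⁻¹ * phi (g * h) (tt x y) * tt g h
        = (tt g h)⁻¹ * (phi (g * h) (tt x y) * tt g h) := by rw [mul_assoc]
      _ = (tt g h)⁻¹ * (tt g h * phi (h * g) (tt x y)) := by rw [this]
      _ = phi (h * g) (tt x y) := by rw [inv_mul_cancel_left]
  have := DFunLike.congr_fun key z
  simp only [MonoidHom.comp_apply, MulEquiv.coe_toMonoidHom, MulAut.conj_symm_apply] at this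
  calc phi (g * h) z * tt g h
      = tt g h * ((tt g h)⁻¹ * phi (g * h) z * tt g h) := by group
    _ = tt g h * phi (h * g) z := by rw [this]

/-- Generalised Peiffer identity: conjugation is the action of the image under `λ`. -/
lemma conj_eq_phi_lam (m : TT G) : ∀ z : TT G, m * z * m⁻¹ = phi (lam m) z := by
  induction m using tt_induction with
  | one => intro z; simp [phi_one]
  | gen g h =>
    intro z
    have h1 := interchange_all g h (phi ((h * g)⁻¹) z)
    rw [phi_phi, phi_phi] at h1
    have e1 : h * g * (h * g)⁻¹ = 1 := by group
    rw [e1, phi_one] at h1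
    have : tt g h * z * (tt g h)⁻¹ = phi (g * h * (h * g)⁻¹) z := by
      rw [← h1]; group
    rw [this, lam_tt, commutatorElement_def]
    congr 1; group
  | mul u v hu hv =>
    intro z
    have : u * v * z * (u * v)⁻¹ = u * (v * z * v⁻¹) * u⁻¹ := by group
    rw [this, hv, hu, phi_phi, map_mul]
  | inv u hu =>
    intro z
    have h1 := hu (u⁻¹ * z * u)
    have h2 : u * (u⁻¹ * z * u) * u⁻¹ = z := by group
    rw [h2] at h1
    rw [map_inv]
    have := congrArg (phi (lam u)⁻¹) h1
    rw [phi_phi, inv_mul_cancel, phi_one] at this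
    rw [inv_inv]; exact this.symm

lemma central_of_lam_eq_one {m : TT G} (hm : lam m = 1) (z : TT G) : m * z = z * m := by
  have := conj_eq_phi_lam m z
  rw [hm, phi_one] at this
  calc m * z = m * z * m⁻¹ * m := by group
    _ = z * m := by rw [this]

end NTaux
namespace NTaux

variable {G : Type u} [Group G]

/-- Image of a tensor generator in the abelianisation of the tensor square. -/
def ft (g h : G) : Abelianization (TT G) := Abelianization.of (tt g h)

lemma ft_def (g h : G) : ft g h = Abelianization.of (tt g h) := rfl

/-- The induced action on the abelianisation. -/
def Phi (u : G) : Abelianization (TT G) →* Abelianization (TT G) :=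
  Abelianization.map (phi u)

lemma Phi_ab (u : G) (w : TT G) :
    Phi u (Abelianization.of w) = Abelianization.of (phi u w) :=
  Abelianization.map_of _ _

lemma ab_surj : Function.Surjective (Abelianization.of : TT G → Abelianization (TT G)) :=
  fun z => Quotient.inductionOn' z fun w => ⟨w, rfl⟩

lemma Phi_mul (u v : G) (z : Abelianization (TT G)) : Phi u (Phi v z) = Phi (u * v) z := by
  obtain ⟨w, rfl⟩ := ab_surj z
  rw [Phi_ab, Phi_ab, Phi_ab, phi_phi]

lemma Phi_one' (z : Abelianization (TT G)) : Phi (1 : G) z = z := by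
  obtain ⟨w, rfl⟩ := ab_surj z
  rw [Phi_ab, phi_one]

lemma Phi_swap (u v : G) (z : Abelianization (TT G)) : Phi (u * v) z = Phi (v * u) z := by
  obtain ⟨w, rfl⟩ := ab_surj z
  rw [Phi_ab, Phi_ab]
  have e : phi (u * v) w = tt u v * phi (v * u) w * (tt u v)⁻¹ := by
    rw [conj_eq_phi_lam (tt u v), phi_phi, lam_tt, commutatorElement_def]
    congr 1
    group
  rw [e, map_mul, map_mul, map_inv, mul_right_comm, mul_inv_cancel, one_mul]

lemma Phi_comm (u v : G) (z : Abelianization (TT G)) :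
    Phi u (Phi v z) = Phi v (Phi u z) := by
  rw [Phi_mul, Phi_mul, Phi_swap]

lemma Phi_inj (u : G) : Function.Injective (Phi (G := G) u) := by
  intro z w h
  have h2 := congrArg (Phi u⁻¹) h
  rwa [Phi_mul, inv_mul_cancel, Phi_one', Phi_mul, inv_mul_cancel, Phi_one'] at h2

lemma fA (g x h : G) : ft (g * x) h = Phi g (ft x h) * ft g h := by
  rw [ft_def, ft_def, ft_def, relA', map_mul, Phi_ab]

lemma fB (g h y : G) : ft g (h * y) = ft g h * Phi h (ft g y) := by
  rw [ft_def, ft_def, ft_def, relB', map_mul, Phi_ab]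

lemma ft_one_left (h : G) : ft (1 : G) h = 1 := by rw [ft_def, tt_one_left, map_one]

lemma ft_one_right (g : G) : ft g (1 : G) = 1 := by rw [ft_def, tt_one_right, map_one]

lemma Phi_ft (u x y : G) : Phi u (ft x y) = ft (u * x * u⁻¹) (u * y * u⁻¹) := by
  rw [ft_def, Phi_ab, phi_tt, ft_def]

lemma ftconj (a y : G) : ft a (a * y * a⁻¹) = Phi a (ft a y) := by
  have e : a * a * a⁻¹ = a := by group
  rw [Phi_ft, e]

lemma hzL (g h : G) : Phi g (ft g⁻¹ h) * ft g h = 1 := by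
  have h1 := fA g g⁻¹ h
  rw [mul_inv_cancel, ft_one_left] at h1
  exact h1.symm

lemma hzR (g h : G) : ft g h * Phi h (ft g h⁻¹) = 1 := by
  have h1 := fB g h h⁻¹
  rw [mul_inv_cancel, ft_one_right] at h1
  exact h1.symm

lemma hzR' (g h : G) : Phi h (ft g h⁻¹) * ft g h = 1 := by
  rw [mul_comm]; exact hzR g h

lemma E0 (a y : G) : Phi y (ft a a) = ft a a := by
  have w1 : ft a (a * y * a⁻¹) = ft a a * Phi a (ft a y) * Phi y (Phi a (ft a a⁻¹)) := by
    calc ft a (a * y * a⁻¹) = ft a (a * (y * a⁻¹)) := by rw [mul_assoc]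
      _ = ft a a * Phi a (ft a y * Phi y (ft a a⁻¹)) := by rw [fB, fB]
      _ = ft a a * (Phi a (ft a y) * Phi a (Phi y (ft a a⁻¹))) := by rw [map_mul]
      _ = ft a a * Phi a (ft a y) * Phi y (Phi a (ft a a⁻¹)) := by
          rw [Phi_comm a y, ← mul_assoc]
  have h := (ftconj a y).symm.trans w1
  have h2 := congrArg (· * Phi y (ft a a)) h
  rw [mul_assoc (ft a a * Phi a (ft a y)), ← map_mul] at h2
  have hz : Phi a (ft a a⁻¹) * ft a a = 1 := by rw [mul_comm]; exact hzR a a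
  rw [hz, map_one, mul_one] at h2
  have h3 : Phi a (ft a y) * Phi y (ft a a) = Phi a (ft a y) * ft a a := by
    rw [h2, mul_comm]
  exact mul_left_cancel h3

lemma L9a (a x : G) : ft (a * x) (a * x) =
    Phi a (ft x a) * Phi a (Phi a (ft x x)) * ft a a * Phi a (ft a x) := by
  calc ft (a * x) (a * x) = Phi a (ft x (a * x)) * ft a (a * x) := by rw [fA]
    _ = Phi a (ft x a * Phi a (ft x x)) * (ft a a * Phi a (ft a x)) := by rw [fB, fB]
    _ = _ := by rw [map_mul]; ac_rfl

lemma E3 (a x y : G) : Phi y (ft x a * ft a x) = ft x a * ft a x := by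
  have h9 := congrArg (Phi y) (L9a a x)
  rw [E0 (a * x) y] at h9
  simp only [map_mul] at h9
  rw [Phi_comm y a (Phi a (ft x x)), Phi_comm y a (ft x x), E0 x y, E0 a y] at h9
  rw [L9a] at h9
  -- h9 : P1 * P2 * P3 * P4 = Q1 * P2 * P3 * Q4 with Pi := Phi y (Phi a ..)
  have h9' : Phi y (Phi a (ft x a)) * Phi y (Phi a (ft a x)) *
        (Phi a (Phi a (ft x x)) * ft a a) =
      Phi a (ft x a) * Phi a (ft a x) * (Phi a (Phi a (ft x x)) * ft a a) := by
    calc Phi y (Phi a (ft x a)) * Phi y (Phi a (ft a x)) *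
          (Phi a (Phi a (ft x x)) * ft a a)
        = Phi y (Phi a (ft x a)) * Phi a (Phi a (ft x x)) * ft a a *
            Phi y (Phi a (ft a x)) := by ac_rfl
      _ = Phi a (ft x a) * Phi a (Phi a (ft x x)) * ft a a * Phi a (ft a x) := h9.symm
      _ = _ := by ac_rfl
  have h9'' := mul_right_cancel h9'
  rw [Phi_comm y a, Phi_comm y a, ← map_mul, ← map_mul, ← map_mul] at h9''
  exact Phi_inj a h9''

lemma L10 (a x k : G) :
    ft (a * x * a⁻¹) k * Phi x (ft a k) = Phi a (ft x k) * ft a k := by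
  have e : a * x * a⁻¹ = a * (x * a⁻¹) := by group
  calc ft (a * x * a⁻¹) k * Phi x (ft a k)
      = Phi a (Phi x (ft a⁻¹ k) * ft x k) * ft a k * Phi x (ft a k) := by
        rw [e, fA a (x * a⁻¹) k, fA x a⁻¹ k]
    _ = Phi x (Phi a (ft a⁻¹ k)) * Phi x (ft a k) * (Phi a (ft x k) * ft a k) := by
        rw [map_mul, Phi_comm a x]; ac_rfl
    _ = Phi x (Phi a (ft a⁻¹ k) * ft a k) * (Phi a (ft x k) * ft a k) := by rw [map_mul]
    _ = Phi a (ft x k) * ft a k := by rw [hzL a k, map_one, one_mul]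

lemma L11 (g a y : G) :
    ft g (a * y * a⁻¹) * Phi y (ft g a) = ft g a * Phi a (ft g y) := by
  have e : a * y * a⁻¹ = a * (y * a⁻¹) := by group
  calc ft g (a * y * a⁻¹) * Phi y (ft g a)
      = ft g a * (Phi a (ft g y * Phi y (ft g a⁻¹))) * Phi y (ft g a) := by
        rw [e, fB g a (y * a⁻¹), fB g y a⁻¹]
    _ = ft g a * Phi a (ft g y) * (Phi y (Phi a (ft g a⁻¹)) * Phi y (ft g a)) := by
        rw [map_mul, Phi_comm a y]; ac_rfl
    _ = ft g a * Phi a (ft g y) * Phi y (Phi a (ft g a⁻¹) * ft g a) := by rw [map_mul]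
    _ = ft g a * Phi a (ft g y) := by
        rw [show Phi a (ft g a⁻¹) * ft g a = 1 from by rw [mul_comm]; exact hzR g a,
          map_one, mul_one]

lemma L12 (a x y : G) :
    ft x a * Phi a (ft x y) * ft a y = ft x y * Phi x (ft a y) * Phi y (ft x a) := by
  have hstar := L10 a x (a * y * a⁻¹)
  rw [ftconj a y] at hstar
  -- hstar : ft (ᵃx) (ᵃy) * Phi x (Phi a (ft a y)) = Phi a (ft x (ᵃy)) * Phi a (ft a y)
  have h2 := congrArg (· * Phi a (Phi y (ft x a))) hstar
  have key : Phi a (ft x y * Phi x (ft a y) * Phi y (ft x a)) =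
      Phi a (ft x a * Phi a (ft x y) * ft a y) := by
    calc Phi a (ft x y * Phi x (ft a y) * Phi y (ft x a))
        = Phi a (ft x y) * Phi a (Phi x (ft a y)) * Phi a (Phi y (ft x a)) := by
          rw [map_mul, map_mul]
      _ = ft (a * x * a⁻¹) (a * y * a⁻¹) * Phi x (Phi a (ft a y)) *
            Phi a (Phi y (ft x a)) := by
          rw [Phi_ft a x y, Phi_comm a x]
      _ = Phi a (ft x (a * y * a⁻¹)) * Phi a (ft a y) * Phi a (Phi y (ft x a)) := by
          rw [hstar]
      _ = Phi a (ft x (a * y * a⁻¹) * Phi y (ft x a)) * Phi a (ft a y) := by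
          rw [map_mul]; ac_rfl
      _ = Phi a (ft x a * Phi a (ft x y)) * Phi a (ft a y) := by rw [L11 x a y]
      _ = Phi a (ft x a * Phi a (ft x y) * ft a y) := by rw [← map_mul]
  exact (Phi_inj a key.symm)

lemma L13 (a x y : G) :
    ft a ⁅x, y⁆ * Phi y (ft a x) * ft a y = ft a x * Phi x (ft a y) := by
  have e : ⁅x, y⁆ = (x * y) * (x⁻¹ * y⁻¹) := by rw [commutatorElement_def]; group
  have hQ : Phi (x * y) (ft a (x⁻¹ * y⁻¹)) * Phi y (ft a x) * ft a y = 1 := by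
    have expand : ft a (x⁻¹ * y⁻¹) = ft a x⁻¹ * Phi x⁻¹ (ft a y⁻¹) := fB a x⁻¹ y⁻¹
    calc Phi (x * y) (ft a (x⁻¹ * y⁻¹)) * Phi y (ft a x) * ft a y
        = Phi (x * y) (ft a x⁻¹) * Phi (x * y) (Phi x⁻¹ (ft a y⁻¹)) *
            Phi y (ft a x) * ft a y := by rw [expand, map_mul]
      _ = Phi y (Phi x (ft a x⁻¹)) * Phi y (ft a x) *
            (Phi y (ft a y⁻¹) * ft a y) := by
          rw [← Phi_mul x y, Phi_comm x y (ft a x⁻¹),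
            ← Phi_mul x y (Phi x⁻¹ (ft a y⁻¹)), Phi_comm x y (Phi x⁻¹ (ft a y⁻¹)),
            Phi_mul x x⁻¹, mul_inv_cancel, Phi_one']
          ac_rfl
      _ = Phi y (Phi x (ft a x⁻¹) * ft a x) * (Phi y (ft a y⁻¹) * ft a y) := by
          rw [map_mul]
      _ = 1 := by
          rw [show Phi x (ft a x⁻¹) * ft a x = 1 from by rw [mul_comm]; exact hzR a x,
            hzR' a y, map_one, one_mul]
  calc ft a ⁅x, y⁆ * Phi y (ft a x) * ft a y
      = ft a (x * y) * (Phi (x * y) (ft a (x⁻¹ * y⁻¹)) * Phi y (ft a x) * ft a y) := by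
        rw [e, fB a (x * y) (x⁻¹ * y⁻¹)]; ac_rfl
    _ = ft a (x * y) := by rw [hQ, mul_one]
    _ = ft a x * Phi x (ft a y) := fB a x y

lemma L14 (a x y : G) : ft a ⁅x, y⁆ * ft x y = Phi a (ft x y) := by
  have h12 := L12 a x y
  have h13 := L13 a x y
  have h3 := E3 a x y
  apply mul_right_cancel (b := Phi y (ft a x) * ft a y * (Phi y (ft x a) * ft x a))
  calc ft a ⁅x, y⁆ * ft x y * (Phi y (ft a x) * ft a y * (Phi y (ft x a) * ft x a))
      = (ft a ⁅x, y⁆ * Phi y (ft a x) * ft a y) *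
          (ft x y * (Phi y (ft x a) * ft x a)) := by ac_rfl
    _ = (ft a x * Phi x (ft a y)) * (ft x y * (Phi y (ft x a) * ft x a)) := by rw [h13]
    _ = (ft x y * Phi x (ft a y) * Phi y (ft x a)) * (ft a x * ft x a) := by ac_rfl
    _ = (ft x a * Phi a (ft x y) * ft a y) * (ft a x * ft x a) := by rw [← h12]
    _ = Phi a (ft x y) * ft a y * ft x a * (ft x a * ft a x) := by ac_rfl
    _ = Phi a (ft x y) * ft a y * ft x a * Phi y (ft x a * ft a x) := by rw [h3]
    _ = Phi a (ft x y) * ft a y * ft x a * (Phi y (ft x a) * Phi y (ft a x)) := by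
        rw [map_mul]
    _ = Phi a (ft x y) * (Phi y (ft a x) * ft a y * (Phi y (ft x a) * ft x a)) := by
        ac_rfl

end NTaux
namespace NTaux

section FreeCase

variable {α : Type u}

/-- In the tensor square of a free group, an element that dies under both `λ` and
abelianisation is trivial. -/
lemma eq_one_of_lam_ab {w : TT (FreeGroup α)} (h1 : lam w = 1)
    (h2 : Abelianization.of w = 1) : w = 1 := by
  classical
  set F := FreeGroup α
  set R : Subgroup F := lam.range with hR
  have hsurj : Function.Surjective (lam.rangeRestrict : TT F →* R) :=
    MonoidHom.rangeRestrict_surjective lam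
  set σ : R →* TT F :=
    IsFreeGroup.lift (fun b => Classical.choose (hsurj (IsFreeGroup.of b))) with hσ
  have hs : ∀ r : R, lam.rangeRestrict (σ r) = r := by
    have : (lam.rangeRestrict.comp σ) = MonoidHom.id R := by
      apply IsFreeGroup.ext_hom
      intro b
      simp only [MonoidHom.comp_apply, MonoidHom.id_apply, hσ, IsFreeGroup.lift_of]
      exact Classical.choose_spec (hsurj (IsFreeGroup.of b))
    intro r
    exact DFunLike.congr_fun this r
  have hlamσ : ∀ r : R, lam (σ r) = (r : F) := by
    intro r
    have := congrArg (Subtype.val) (hs r)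
    simpa [MonoidHom.coe_rangeRestrict] using this
  have hcentral : ∀ t : TT F, lam (t * (σ (lam.rangeRestrict t))⁻¹) = 1 := by
    intro t
    rw [map_mul, map_inv, hlamσ, MonoidHom.coe_rangeRestrict, mul_inv_cancel]
  set j : TT F →* TT F :=
    { toFun := fun t => t * (σ (lam.rangeRestrict t))⁻¹
      map_one' := by simp
      map_mul' := by
        intro t t'
        simp only [map_mul, mul_inv_rev]
        have hcomm : Commute (t' * (σ (lam.rangeRestrict t'))⁻¹) (σ (lam.rangeRestrict t)) :=
          central_of_lam_eq_one (hcentral t') (σ (lam.rangeRestrict t))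
        have hcomm' := hcomm.inv_right
        calc t * t' * ((σ (lam.rangeRestrict t'))⁻¹ * (σ (lam.rangeRestrict t))⁻¹)
            = t * ((t' * (σ (lam.rangeRestrict t'))⁻¹) * (σ (lam.rangeRestrict t))⁻¹) := by
              group
          _ = t * ((σ (lam.rangeRestrict t))⁻¹ * (t' * (σ (lam.rangeRestrict t'))⁻¹)) := by
              rw [hcomm'.eq]
          _ = t * (σ (lam.rangeRestrict t))⁻¹ * (t' * (σ (lam.rangeRestrict t'))⁻¹) := by
              group
      } with hj
  have hjker : commutator (TT F) ≤ j.ker := by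
    rw [commutator_eq_closure]
    rw [Subgroup.closure_le]
    rintro c ⟨t, t', rfl⟩
    have hcom : Commute (j t) (j t') := by
      have h1 : lam (j t) = 1 := hcentral t
      exact central_of_lam_eq_one h1 (j t')
    simp only [SetLike.mem_coe, MonoidHom.mem_ker, map_commutatorElement]
    exact commutatorElement_eq_one_iff_commute.mpr hcom
  have hw : w ∈ commutator (TT F) := (QuotientGroup.eq_one_iff w).mp h2
  have hjw : j w = 1 := hjker hw
  have hr1 : lam.rangeRestrict w = 1 := by
    apply Subtype.ext
    simpa [MonoidHom.coe_rangeRestrict] using h1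
  have : j w = w := by
    show w * (σ (lam.rangeRestrict w))⁻¹ = w
    rw [hr1, map_one, inv_one, mul_one]
  rw [this] at hjw
  exact hjw

lemma B2_free (a x y : FreeGroup α) :
    tt a ⁅x, y⁆ * tt x y = phi a (tt x y) := by
  rw [← mul_inv_eq_one]
  apply eq_one_of_lam_ab
  · simp only [map_mul, map_inv, lam_tt, lam_phi]
    simp only [commutatorElement_def]
    group
  · simp only [map_mul, map_inv]
    rw [← ft_def, ← ft_def, ← Phi_ab, ← ft_def, L14, mul_inv_cancel]

end FreeCase

section Transfer

variable {G : Type u} [Group G]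

/-- The canonical epimorphism from the tensor square of the free group on `G`. -/
def theta : TT (FreeGroup G) →* TT G :=
  PresentedGroup.toGroup
    (f := fun p : FreeGroup G × FreeGroup G =>
      tt (FreeGroup.lift id p.1) (FreeGroup.lift id p.2)) (by
    rintro r (⟨g, x, h, rfl⟩ | ⟨g, h, y, rfl⟩) <;>
      simp only [map_mul, map_inv, FreeGroup.lift_apply_of, conjActions, MulAut.conj_apply,
        mul_inv_eq_one]
    · have := relA (FreeGroup.lift id g) (FreeGroup.lift id x) (FreeGroup.lift id h)
      exact this
    · have := relB (FreeGroup.lift id g) (FreeGroup.lift id h) (FreeGroup.lift id y)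
      exact this)

@[simp] lemma theta_tt (u w : FreeGroup G) :
    theta (tt u w) = tt (FreeGroup.lift id u) (FreeGroup.lift id w) :=
  PresentedGroup.toGroup.of _

lemma theta_phi (u : G) (z : TT (FreeGroup G)) :
    theta (phi (FreeGroup.of u) z) = phi u (theta z) := by
  have : theta.comp (phi (FreeGroup.of u)) = (phi u).comp theta := by
    apply hom_ext; intro x y
    simp only [MonoidHom.comp_apply, phi_tt, theta_tt, map_mul, map_inv,
      FreeGroup.lift_apply_of, id_eq]
  exact DFunLike.congr_fun this z

/-- The key identity `B2`: `⟨a, [x,y]⟩ ⟨x,y⟩ = φ_a ⟨x,y⟩` in the tensor square. -/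
lemma B2 (a x y : G) : tt a ⁅x, y⁆ * tt x y = phi a (tt x y) := by
  have h := congrArg theta (B2_free (FreeGroup.of a) (FreeGroup.of x) (FreeGroup.of y))
  rw [map_mul, theta_tt, theta_tt, theta_phi, theta_tt, map_commutatorElement] at h
  simpa only [FreeGroup.lift_apply_of, id_eq] using h

end Transfer

end NTaux
namespace NTaux

variable {G : Type u} [Group G]

/-- Full derivation identity: `⟨g, λ m⟩ · m = φ_g m`. -/
lemma I4 (m : TT G) : ∀ g : G, tt g (lam m) * m = phi g m := by
  induction m using tt_induction with
  | one => intro g; simp only [map_one, tt_one_right, one_mul]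
  | gen x y => intro g; rw [lam_tt]; exact B2 g x y
  | mul m n hm hn =>
    intro g
    rw [map_mul, relB' g (lam m) (lam n), map_mul]
    have e : phi (lam m) (tt g (lam n)) = m * tt g (lam n) * m⁻¹ :=
      (conj_eq_phi_lam m (tt g (lam n))).symm
    rw [e, ← hm g, ← hn g]
    group
  | inv m hm =>
    intro g
    rw [map_inv, map_inv]
    have hk := inv_right' g (lam m)
    rw [← conj_eq_phi_lam m (tt g (lam m)⁻¹)] at hk
    have e1 : tt g (lam m)⁻¹ = m⁻¹ * (tt g (lam m))⁻¹ * m := by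
      rw [← hk]; group
    have e2 : (tt g (lam m))⁻¹ = m * (phi g m)⁻¹ := by
      rw [← hm g]; group
    rw [e1, e2]
    group

/-- `φ` fixes the kernel of `λ` pointwise. -/
lemma phi_fix {m : TT G} (hm : lam m = 1) (g : G) : phi g m = m := by
  have h := I4 m g
  rw [hm, tt_one_right, one_mul] at h
  exact h.symm

/-- `ψ(g,h) = ⟨g,h⟩⟨h,g⟩`. -/
def psiel (g h : G) : TT G := tt g h * tt h g

lemma psiel_psiel (g g' : G) : psiel g g' = tt g g' * tt g' g := rfl

lemma lam_psiel (g h : G) : lam (psiel g h) = 1 := by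
  simp only [psiel, map_mul, lam_tt, commutatorElement_def]
  group

lemma lam_D (g : G) : lam (tt g g) = 1 := by
  rw [lam_tt, commutatorElement_def]; group

lemma psiel_swap (g h : G) : psiel g h = psiel h g := by
  have hc := central_of_lam_eq_one (lam_psiel g h) (tt g h)
  have h2 := mul_left_cancel (a := tt g h) (by
    calc tt g h * (tt h g * tt g h) = tt g h * tt h g * tt g h := by rw [mul_assoc]
      _ = tt g h * (tt g h * tt h g) := hc)
  rw [psiel, psiel, h2]

lemma phi_psiel (u g h : G) : phi u (psiel g h) = psiel g h :=
  phi_fix (lam_psiel g h) u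

lemma phi_D (u g : G) : phi u (tt g g) = tt g g :=
  phi_fix (lam_D g) u

lemma psiel_one_right (g : G) : psiel g 1 = 1 := by
  rw [psiel, tt_one_left, tt_one_right, one_mul]

lemma psiel_bilin_right (g h k : G) : psiel g (h * k) = psiel g h * psiel g k := by
  have e1 : tt g (h * k) = tt g h * phi h (tt g k) := relB' g h k
  have e2 : tt (h * k) g = phi h (tt k g) * tt h g := relA' h k g
  show tt g (h * k) * tt (h * k) g = _
  calc tt g (h * k) * tt (h * k) g
      = tt g h * (phi h (tt g k) * phi h (tt k g)) * tt h g := by rw [e1, e2]; group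
    _ = tt g h * phi h (psiel g k) * tt h g := by rw [← map_mul, ← psiel_psiel]
    _ = tt g h * psiel g k * tt h g := by rw [phi_psiel]
    _ = tt g h * (tt h g * psiel g k) := by
        rw [mul_assoc, central_of_lam_eq_one (lam_psiel g k) (tt h g)]
    _ = psiel g h * psiel g k := by rw [← mul_assoc, ← psiel_psiel]

lemma psiel_bilin_left (g h k : G) : psiel (g * h) k = psiel g k * psiel h k := by
  rw [psiel_swap, psiel_bilin_right, psiel_swap k g, psiel_swap k h]

lemma psiel_inv_right (g h : G) : psiel g h⁻¹ = (psiel g h)⁻¹ := by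
  have h1 := psiel_bilin_right g h h⁻¹
  rw [mul_inv_cancel, psiel_one_right] at h1
  exact (eq_inv_of_mul_eq_one_right h1.symm)

lemma psiel_inv_left (g h : G) : psiel g⁻¹ h = (psiel g h)⁻¹ := by
  rw [psiel_swap, psiel_inv_right, psiel_swap h g]

/-- Quadratic expansion of the diagonal. -/
lemma D_mul (g h : G) : tt (g * h) (g * h) = tt g g * tt h h * psiel g h := by
  have e1 : tt (g * h) (g * h) = phi g (tt h (g * h)) * tt g (g * h) := relA' g h (g * h)
  have e2 : tt h (g * h) = tt h g * phi g (tt h h) := relB' h g h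
  have e3 : tt g (g * h) = tt g g * phi g (tt g h) := relB' g g h
  have e4 : phi g (phi g (tt h h)) = tt h h := by
    rw [phi_phi]; exact phi_fix (lam_D h) (g * g)
  have hDg : lam (tt h h * tt g g) = 1 := by rw [map_mul, lam_D, lam_D, mul_one]
  calc tt (g * h) (g * h)
      = phi g (tt h g) * (phi g (phi g (tt h h)) * tt g g) * phi g (tt g h) := by
        rw [e1, e2, e3, map_mul]; group
    _ = phi g (tt h g) * (tt h h * tt g g) * phi g (tt g h) := by rw [e4]
    _ = phi g (tt h g) * (phi g (tt g h) * (tt h h * tt g g)) := by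
        rw [mul_assoc, central_of_lam_eq_one hDg (phi g (tt g h))]
    _ = phi g (tt h g * tt g h) * (tt h h * tt g g) := by rw [map_mul, ← mul_assoc]
    _ = psiel h g * (tt h h * tt g g) := by rw [← psiel_psiel, phi_psiel]
    _ = tt h h * tt g g * psiel h g := by
        rw [central_of_lam_eq_one (lam_psiel h g) (tt h h * tt g g)]
    _ = tt g g * tt h h * psiel g h := by
        rw [psiel_swap h g, central_of_lam_eq_one (lam_D h) (tt g g)]

lemma D_one : tt (1 : G) 1 = 1 := tt_one_left 1

lemma D_inv (g : G) : tt g⁻¹ g⁻¹ = tt g g := by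
  have h1 := D_mul g g⁻¹
  rw [mul_inv_cancel, D_one, psiel_inv_right] at h1
  have h2 : tt g g * tt g⁻¹ g⁻¹ = psiel g g := mul_inv_eq_one.mp h1.symm
  have h3 : tt g g * tt g⁻¹ g⁻¹ = tt g g * tt g g := h2
  exact mul_left_cancel h3

end NTaux
namespace NTaux

variable {G : Type u} [Group G]

lemma psiel_one_left (h : G) : psiel (1 : G) h = 1 := by
  rw [psiel_swap, psiel_one_right]

/-- The subgroup `∇(G) ≤ G ⊗ G` generated by the diagonal elements. -/
def Nabla (G : Type u) [Group G] : Subgroup (TT G) :=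
  Subgroup.closure (Set.range fun g : G => tt g g)

lemma Nabla_le_ker : Nabla G ≤ lam.ker := by
  rw [Nabla, Subgroup.closure_le]
  rintro _ ⟨g, rfl⟩
  exact lam_D g

lemma lam_eq_one_of_mem_Nabla {m : TT G} (hm : m ∈ Nabla G) : lam m = 1 :=
  Nabla_le_ker hm

lemma psiel_mem_Nabla (g h : G) : psiel g h ∈ Nabla G := by
  have h1 : psiel g h = (tt g g * tt h h)⁻¹ * tt (g * h) (g * h) := by
    rw [D_mul]; group
  rw [h1]
  exact Subgroup.mul_mem _
    (Subgroup.inv_mem _ (Subgroup.mul_mem _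
      (Subgroup.subset_closure ⟨g, rfl⟩) (Subgroup.subset_closure ⟨h, rfl⟩)))
    (Subgroup.subset_closure ⟨g * h, rfl⟩)

lemma Nabla_fg (hfg : (⊤ : Subgroup G).FG) : (Nabla G).FG := by
  classical
  obtain ⟨S, hS⟩ := hfg
  set T0 : Set (TT G) := ((fun g => tt g g) '' ↑S) ∪
    ((fun p : G × G => psiel p.1 p.2) '' (↑S ×ˢ ↑S)) with hT0
  have hfin : T0.Finite :=
    (S.finite_toSet.image _).union ((S.finite_toSet.prod S.finite_toSet).image _)
  set W0 := Subgroup.closure T0 with hW0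
  have hpsi1 : ∀ g ∈ S, ∀ h : G, psiel g h ∈ W0 := by
    intro g hg h
    let K : Subgroup G :=
      { carrier := {h | psiel g h ∈ W0}
        one_mem' := by
          show psiel g 1 ∈ W0
          rw [psiel_one_right]; exact Subgroup.one_mem _
        mul_mem' := by
          intro a b ha hb
          show psiel g (a * b) ∈ W0
          rw [psiel_bilin_right]
          exact Subgroup.mul_mem _ ha hb
        inv_mem' := by
          intro a ha
          show psiel g a⁻¹ ∈ W0
          rw [psiel_inv_right]
          exact Subgroup.inv_mem _ ha }
    have hSK : (↑S : Set G) ⊆ ↑K := by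
      intro s hs
      show psiel g s ∈ W0
      exact Subgroup.subset_closure (Or.inr ⟨(g, s), ⟨hg, hs⟩, rfl⟩)
    have hK : (⊤ : Subgroup G) ≤ K := by
      rw [← hS]; exact Subgroup.closure_le K |>.mpr hSK
    exact hK (Subgroup.mem_top h)
  have hpsi : ∀ g h : G, psiel g h ∈ W0 := by
    intro g h
    let K : Subgroup G :=
      { carrier := {g | ∀ h : G, psiel g h ∈ W0}
        one_mem' := by
          intro h
          rw [psiel_one_left]; exact Subgroup.one_mem _
        mul_mem' := by
          intro a b ha hb h
          rw [psiel_bilin_left]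
          exact Subgroup.mul_mem _ (ha h) (hb h)
        inv_mem' := by
          intro a ha h
          rw [psiel_inv_left]
          exact Subgroup.inv_mem _ (ha h) }
    have hSK : (↑S : Set G) ⊆ ↑K := fun s hs => hpsi1 s hs
    have hK : (⊤ : Subgroup G) ≤ K := by
      rw [← hS]; exact Subgroup.closure_le K |>.mpr hSK
    exact hK (Subgroup.mem_top g) h
  have hD : ∀ g : G, tt g g ∈ W0 := by
    intro g
    let K : Subgroup G :=
      { carrier := {g | tt g g ∈ W0}
        one_mem' := by
          show tt (1 : G) 1 ∈ W0
          rw [D_one]; exact Subgroup.one_mem _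
        mul_mem' := by
          intro a b ha hb
          show tt (a * b) (a * b) ∈ W0
          rw [D_mul]
          exact Subgroup.mul_mem _ (Subgroup.mul_mem _ ha hb) (hpsi a b)
        inv_mem' := by
          intro a ha
          show tt a⁻¹ a⁻¹ ∈ W0
          rw [D_inv]
          exact ha }
    have hSK : (↑S : Set G) ⊆ ↑K := by
      intro s hs
      show tt s s ∈ W0
      exact Subgroup.subset_closure (Or.inl ⟨s, hs, rfl⟩)
    have hK : (⊤ : Subgroup G) ≤ K := by
      rw [← hS]; exact Subgroup.closure_le K |>.mpr hSK
    exact hK (Subgroup.mem_top g)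
  have hNW : Nabla G = W0 := by
    apply le_antisymm
    · rw [Nabla, Subgroup.closure_le]
      rintro _ ⟨g, rfl⟩
      exact hD g
    · rw [hW0, Subgroup.closure_le]
      rintro z (⟨g, _, rfl⟩ | ⟨⟨g, h⟩, _, rfl⟩)
      · exact Subgroup.subset_closure ⟨g, rfl⟩
      · exact psiel_mem_Nabla g h
  rw [hNW, Subgroup.fg_iff]
  exact ⟨T0, rfl, hfin⟩

end NTaux
namespace NTaux

variable (G : Type u) [Group G]

/-- The canonical projection from the tensor square onto the exterior square. -/
def pim : TT G →* ExteriorSquare G :=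
  PresentedGroup.toGroup (f := fun p : G × G => wedge p.1 p.2) (by
    intro r hr
    have he : (FreeGroup.lift (fun p : G × G => wedge p.1 p.2) :
        FreeGroup (G × G) →* ExteriorSquare G) = PresentedGroup.mk (exteriorRels G) := by
      apply FreeGroup.ext_hom
      intro p
      simp only [FreeGroup.lift_apply_of]
      rfl
    rw [he]
    exact (QuotientGroup.eq_one_iff r).mpr
      (Subgroup.subset_normalClosure (Or.inl hr)))

variable {G}

@[simp] lemma pim_tt (x y : G) : pim G (tt x y) = wedge x y :=
  PresentedGroup.toGroup.of _

lemma wedge_diag (g : G) : wedge g g = (1 : ExteriorSquare G) :=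
  (QuotientGroup.eq_one_iff _).mpr
    (Subgroup.subset_normalClosure (Or.inr ⟨g, rfl⟩))

lemma pim_surjective : Function.Surjective (pim G) := by
  intro z
  have : z ∈ (pim G).range := by
    apply PresentedGroup.generated_by
    intro j
    exact ⟨tt j.1 j.2, by rw [pim_tt]; rfl⟩
  exact this

@[simp] lemma kappa_wedge (x y : G) : exteriorComm G (wedge x y) = ⁅x, y⁆ :=
  PresentedGroup.toGroup.of _

lemma kappa_pim (z : TT G) : exteriorComm G (pim G z) = lam z := by
  have h : (exteriorComm G).comp (pim G) = lam := by
    apply hom_ext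
    intro x y
    simp only [MonoidHom.comp_apply, pim_tt, kappa_wedge, lam_tt]
  exact DFunLike.congr_fun h z

lemma kerKappa_le_center :
    (exteriorComm G).ker ≤ Subgroup.center (ExteriorSquare G) := by
  intro m hm
  rw [Subgroup.mem_center_iff]
  intro z
  obtain ⟨m', rfl⟩ := pim_surjective m
  obtain ⟨z', rfl⟩ := pim_surjective z
  have hm' : lam m' = 1 := by
    rw [← kappa_pim]; exact hm
  rw [← map_mul, ← map_mul, central_of_lam_eq_one hm' z']

instance Nabla_normal : (Nabla G).Normal := by
  constructor
  intro n hn g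
  have h := central_of_lam_eq_one (lam_eq_one_of_mem_Nabla hn) g
  have : g * n * g⁻¹ = n := by rw [← h]; group
  rw [this]; exact hn

lemma Nabla_le_center : Nabla G ≤ Subgroup.center (TT G) := by
  intro m hm
  rw [Subgroup.mem_center_iff]
  intro z
  exact (central_of_lam_eq_one (lam_eq_one_of_mem_Nabla hm) z).symm

lemma ker_pim : (pim G).ker = Nabla G := by
  apply le_antisymm
  · intro m hm
    obtain ⟨f, rfl⟩ := PresentedGroup.mk_surjective _ m
    have hcomp : (pim G).comp (PresentedGroup.mk (tensorRels (conjActions G))) =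
        PresentedGroup.mk (exteriorRels G) := by
      apply FreeGroup.ext_hom
      intro p
      rfl
    have hm' : pim G (PresentedGroup.mk (tensorRels (conjActions G)) f) = 1 := hm
    have hf : PresentedGroup.mk (exteriorRels G) f = 1 :=
      (DFunLike.congr_fun hcomp f).symm.trans hm'
    have hf2 : f ∈ Subgroup.normalClosure (exteriorRels G) :=
      (QuotientGroup.eq_one_iff f).mp hf
    have hN : Subgroup.normalClosure (exteriorRels G) ≤
        (Nabla G).comap (PresentedGroup.mk (tensorRels (conjActions G))) := by
      haveI : ((Nabla G).comap
          (PresentedGroup.mk (tensorRels (conjActions G)))).Normal :=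
        Subgroup.Normal.comap Nabla_normal _
      apply Subgroup.normalClosure_le_normal
      rintro r (hr | ⟨g, rfl⟩)
      · have : PresentedGroup.mk (tensorRels (conjActions G)) r = 1 := mk_rel hr
        show PresentedGroup.mk (tensorRels (conjActions G)) r ∈ Nabla G
        rw [this]; exact Subgroup.one_mem _
      · show PresentedGroup.mk (tensorRels (conjActions G)) _ ∈ Nabla G
        exact Subgroup.subset_closure ⟨g, rfl⟩
    exact hN hf2
  · rw [Nabla, Subgroup.closure_le]
    rintro _ ⟨g, rfl⟩
    show pim G (tt g g) = 1
    rw [pim_tt, wedge_diag]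

end NTaux
namespace NTaux

lemma fg_map {A B : Type u} [Group A] [Group B] (f : A →* B) {K : Subgroup A}
    (h : K.FG) : (K.map f).FG := by
  classical
  obtain ⟨S, hS⟩ := h
  refine ⟨S.image f, ?_⟩
  rw [Finset.coe_image, ← MonoidHom.map_closure, hS]

lemma fg_of_map_ker {A B : Type u} [Group A] [Group B] (f : A →* B) (K : Subgroup A)
    (h1 : (K.map f).FG) (h2 : (K ⊓ f.ker).FG) : K.FG := by
  classical
  obtain ⟨S1, hS1⟩ := h1
  obtain ⟨S2, hS2⟩ := h2
  have hpre : ∀ b ∈ S1, ∃ a, a ∈ K ∧ f a = b := by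
    intro b hb
    have hb2 : (b : B) ∈ K.map f := by
      rw [← hS1]; exact Subgroup.subset_closure hb
    obtain ⟨a, ha, rfl⟩ := hb2
    exact ⟨a, ha, rfl⟩
  choose pre hpreK hpref using hpre
  set S1' : Finset A := S1.attach.image (fun b => pre b.1 b.2) with hS1'
  have himg : f '' ↑S1' = ↑S1 := by
    ext b
    constructor
    · rintro ⟨a, ha, rfl⟩
      rw [hS1'] at ha
      simp only [Finset.coe_image, Set.mem_image, Finset.mem_coe, Finset.mem_attach,
        Finset.mem_image] at ha
      obtain ⟨c, _, rfl⟩ := ha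
      rw [hpref c.1 c.2]
      exact c.2
    · intro hb
      refine ⟨pre b hb, ?_, hpref b hb⟩
      rw [hS1']
      simp only [Finset.coe_image, Set.mem_image, Finset.mem_coe, Finset.mem_attach]
      exact ⟨⟨b, hb⟩, trivial, rfl⟩
  have hS1'K : (↑S1' : Set A) ⊆ ↑K := by
    rintro a ha
    rw [hS1'] at ha
    simp only [Finset.coe_image, Set.mem_image, Finset.mem_coe, Finset.mem_attach] at ha
    obtain ⟨c, _, rfl⟩ := ha
    exact hpreK c.1 c.2
  have hS2K : (↑S2 : Set A) ⊆ ↑K := by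
    intro a ha
    have : a ∈ K ⊓ f.ker := by rw [← hS2]; exact Subgroup.subset_closure ha
    exact this.1
  set H := Subgroup.closure (↑(S1' ∪ S2) : Set A) with hH
  have hHK : H ≤ K := by
    rw [hH, Subgroup.closure_le, Finset.coe_union]
    exact Set.union_subset hS1'K hS2K
  have hKH : K ≤ H := by
    intro k hk
    have hS1'H : Subgroup.closure (↑S1' : Set A) ≤ H := by
      apply Subgroup.closure_mono
      rw [Finset.coe_union]
      exact Set.subset_union_left
    have hS2H : Subgroup.closure (↑S2 : Set A) ≤ H := by
      apply Subgroup.closure_mono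
      rw [Finset.coe_union]
      exact Set.subset_union_right
    have hfk : f k ∈ (Subgroup.closure (↑S1' : Set A)).map f := by
      rw [MonoidHom.map_closure, himg, hS1]
      exact Subgroup.mem_map.mpr ⟨k, hk, rfl⟩
    obtain ⟨a, haS, hfa⟩ := Subgroup.mem_map.mp hfk
    have haK : a ∈ K := (Subgroup.closure_le K |>.mpr hS1'K) haS
    have hker : k * a⁻¹ ∈ K ⊓ f.ker := by
      constructor
      · exact K.mul_mem hk (K.inv_mem haK)
      · show f (k * a⁻¹) = 1
        rw [map_mul, map_inv, hfa, mul_inv_cancel]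
    have hmem : k * a⁻¹ ∈ Subgroup.closure (↑S2 : Set A) := by rw [hS2]; exact hker
    have h1 : k * a⁻¹ ∈ H := hS2H hmem
    have h2 : a ∈ H := hS1'H haS
    have : k * a⁻¹ * a ∈ H := H.mul_mem h1 h2
    simpa using this
  exact ⟨S1' ∪ S2, le_antisymm hHK hKH⟩

lemma fg_of_le_center_fg {X : Type u} [Group X] {Hc : Subgroup X}
    (hle : Hc ≤ Subgroup.center X) (hfg : Hc.FG) :
    ∀ K : Subgroup X, K ≤ Hc → K.FG := by
  letI : CommGroup Hc :=
    { (inferInstance : Group Hc) with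
      mul_comm := fun a b => Subtype.ext
        ((Subgroup.mem_center_iff.mp (hle a.2) b.1).symm) }
  haveI hfgg : Group.FG Hc := (Group.fg_iff_subgroup_fg Hc).mpr hfg
  haveI : Module.Finite ℤ (Additive Hc) := Module.Finite.iff_addGroup_fg.mpr inferInstance
  haveI : IsNoetherian ℤ (Additive Hc) := isNoetherian_of_isNoetherianRing_of_finite ℤ _
  intro K hK
  have h1 : (K.subgroupOf Hc).FG := by
    rw [Subgroup.fg_iff_add_fg]
    have h2 := IsNoetherian.noetherian
      (AddSubgroup.toIntSubmodule ((K.subgroupOf Hc).toAddSubgroup))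
    rw [Submodule.fg_iff_addSubgroup_fg, AddSubgroup.toIntSubmodule_toAddSubgroup] at h2
    exact h2
  have h3 := fg_map Hc.subtype h1
  rwa [Subgroup.subgroupOf_map_subtype, inf_eq_left.mpr hK] at h3

lemma noeth_of_hom {A B : Type u} [Group A] [Group B] (f : A →* B)
    (hker : ∀ K : Subgroup A, K ≤ f.ker → K.FG) (hB : IsNoetherianGroup B) :
    IsNoetherianGroup A :=
  fun K => fg_of_map_ker f K (hB _) (hker _ inf_le_right)

lemma noeth_of_surj {A B : Type u} [Group A] [Group B] (f : A →* B)
    (hf : Function.Surjective f) (hA : IsNoetherianGroup A) : IsNoetherianGroup B := by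
  intro K
  have h := fg_map f (hA (K.comap f))
  rwa [Subgroup.map_comap_eq_self_of_surjective hf] at h

end NTaux

/-- for a Noetherian group `G`, the tensor square `G ⊗ G` is Noetherian
iff the Schur multiplier `M(G)` is finitely generated. -/
theorem tensorSquare_noetherian_iff_schur_fg {G : Type u} [Group G]
    (hG : IsNoetherianGroup G) :
    IsNoetherianGroup (TensorSquare G) ↔ (SchurMultiplier G).FG := by
  constructor
  · intro hT
    have hT' : IsNoetherianGroup (NTaux.TT G) := hT
    have hE : IsNoetherianGroup (ExteriorSquare G) :=
      NTaux.noeth_of_surj (NTaux.pim G) NTaux.pim_surjective hT'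
    exact hE (SchurMultiplier G)
  · intro hM
    have hEnoeth : IsNoetherianGroup (ExteriorSquare G) := by
      apply NTaux.noeth_of_hom (exteriorComm G) _ hG
      intro K hK
      exact NTaux.fg_of_le_center_fg NTaux.kerKappa_le_center hM K hK
    have hTnoeth : IsNoetherianGroup (NTaux.TT G) := by
      apply NTaux.noeth_of_hom (NTaux.pim G) _ hEnoeth
      intro K hK
      rw [NTaux.ker_pim] at hK
      exact NTaux.fg_of_le_center_fg NTaux.Nabla_le_center
        (NTaux.Nabla_fg (hG ⊤)) K hK
    exact hTnoeth
end

section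
/- Let G be a finite metacyclic group, given as an extension 1 → N → G → H → 1 with N and H cyclic. Then there exists s ∈ G such that every element of the Schur multiplier M(G) ≤ G ∧ G has the form x ∧ s for some x ∈ N with [x, s] = 1; in particular the Bogomolov multiplier B₀(G) is trivial, and moreover B₀(X) = 0 for any central extension 1 → C → X → G → 1. -/
universe u

open scoped commutatorElement

variable {G H : Type u} [Group G] [Group H]

section ExtAux

variable {Y : Type u} [Group Y]

private lemma mk_rel_one {r : FreeGroup (Y × Y)} (hr : r ∈ exteriorRels Y) :
    PresentedGroup.mk (exteriorRels Y) r = 1 :=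
  (QuotientGroup.eq_one_iff r).mpr (Subgroup.subset_normalClosure hr)

lemma rel1 (g g' h : Y) :
    wedge (g * g') h = wedge (g * g' * g⁻¹) (g * h * g⁻¹) * wedge g h := by
  have hm : (FreeGroup.of (g * g', h) *
      (FreeGroup.of (g * g' * g⁻¹, (conjActions Y).actG g h) * FreeGroup.of (g, h))⁻¹)
      ∈ exteriorRels Y := Or.inl (Or.inl ⟨g, g', h, rfl⟩)
  have h1 := mk_rel_one hm
  rw [map_mul, map_inv, map_mul, mul_inv_eq_one] at h1
  have hact : (conjActions Y).actG g h = g * h * g⁻¹ := MulAut.conj_apply g h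
  rw [hact] at h1
  exact h1

lemma rel2 (g h h' : Y) :
    wedge g (h * h') = wedge g h * wedge (h * g * h⁻¹) (h * h' * h⁻¹) := by
  have hm : (FreeGroup.of (g, h * h') *
      (FreeGroup.of (g, h) * FreeGroup.of ((conjActions Y).actH h g, h * h' * h⁻¹))⁻¹)
      ∈ exteriorRels Y := Or.inl (Or.inr ⟨g, h, h', rfl⟩)
  have h1 := mk_rel_one hm
  rw [map_mul, map_inv, map_mul, mul_inv_eq_one] at h1
  have hact : (conjActions Y).actH h g = h * g * h⁻¹ := MulAut.conj_apply h g
  rw [hact] at h1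
  exact h1

lemma wedge_self (g : Y) : wedge g g = 1 := mk_rel_one (Or.inr ⟨g, rfl⟩)

lemma wedge_one_left (h : Y) : wedge 1 h = 1 := by
  have h1 := rel1 1 1 h
  simp only [one_mul, mul_one, inv_one] at h1
  exact (left_eq_mul.mp h1)

lemma wedge_one_right (g : Y) : wedge g 1 = 1 := by
  have h1 := rel2 g 1 1
  simp only [one_mul, mul_one, inv_one] at h1
  exact (left_eq_mul.mp h1)

lemma wedge_mul_wedge_symm (x z : Y) : wedge z x * wedge x z = 1 := by
  have e0 : x * (x⁻¹ * z * x) = z * x := by group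
  have h1 := wedge_self (x * (x⁻¹ * z * x))
  rw [e0] at h1
  have h2 := rel1 x (x⁻¹ * z * x) (z * x)
  rw [e0] at h2
  have e1 : z * x * x⁻¹ = z := by group
  rw [e1] at h2
  have e2 : x * (z * x) * x⁻¹ = x * z := by group
  rw [e2] at h2
  have h3 := rel2 x z x
  rw [wedge_self, mul_one] at h3
  have h4 := rel2 z x z
  rw [wedge_self, mul_one] at h4
  rw [h1, h3, h4] at h2
  exact h2.symm

lemma wedge_inv (x z : Y) : (wedge x z)⁻¹ = wedge z x :=
  inv_eq_of_mul_eq_one_left (wedge_mul_wedge_symm x z)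

lemma wedge_zpow_left (g : Y) : ∀ i : ℤ, wedge (g ^ i) g = 1 := by
  have step : ∀ i : ℤ, wedge (g ^ (i + 1)) g = wedge (g ^ i) g := by
    intro i
    have h2 := rel1 (g ^ i) g g
    rw [wedge_self, one_mul, ← zpow_add_one] at h2
    exact h2
  intro i
  induction i using Int.induction_on with
  | zero => rw [zpow_zero]; exact wedge_one_left g
  | succ n ih => rw [step]; exact ih
  | pred n ih =>
      have h := step (-(n : ℤ) - 1)
      have e : (-(n : ℤ) - 1) + 1 = -(n : ℤ) := by ring
      rw [e] at h
      rw [← h]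
      exact ih

lemma wedge_zpow_zpow (g : Y) (i j : ℤ) : wedge (g ^ i) (g ^ j) = 1 := by
  have step : ∀ j : ℤ, wedge (g ^ i) (g ^ (j + 1)) = wedge (g ^ i) (g ^ j) := by
    intro j
    have h2 := rel2 (g ^ i) (g ^ j) g
    have e1 : g ^ j * g ^ i * (g ^ j)⁻¹ = g ^ i := by group
    have e2 : g ^ j * g * (g ^ j)⁻¹ = g := by group
    rw [e1, e2, wedge_zpow_left, mul_one, ← zpow_add_one] at h2
    exact h2
  induction j using Int.induction_on with
  | zero => rw [zpow_zero]; exact wedge_one_right _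
  | succ n ih => rw [step]; exact ih
  | pred n ih =>
      have h := step (-(n : ℤ) - 1)
      have e : (-(n : ℤ) - 1) + 1 = -(n : ℤ) := by ring
      rw [e] at h
      rw [← h]
      exact ih

lemma wedge_star (g h g' h' : Y) :
    wedge (g * h * g' * (g * h)⁻¹) (g * h * h' * (g * h)⁻¹) * wedge g h
      = wedge g h * wedge (h * g * g' * (h * g)⁻¹) (h * g * h' * (h * g)⁻¹) := by
  have hA := rel1 g g' (h * h')
  have hA2 := rel2 g h h'
  have e : g * (h * h') * g⁻¹ = (g * h * g⁻¹) * (g * h' * g⁻¹) := by group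
  rw [e] at hA
  have hA3 := rel2 (g * g' * g⁻¹) (g * h * g⁻¹) (g * h' * g⁻¹)
  have e1 : g * h * g⁻¹ * (g * g' * g⁻¹) * (g * h * g⁻¹)⁻¹ = g * h * g' * (g * h)⁻¹ := by group
  have e2 : g * h * g⁻¹ * (g * h' * g⁻¹) * (g * h * g⁻¹)⁻¹ = g * h * h' * (g * h)⁻¹ := by group
  rw [e1, e2] at hA3
  rw [hA3, hA2] at hA
  -- hA : wedge (g*g') (h*h') =
  --   (wedge (g*g'*g⁻¹) (g*h*g⁻¹) * P) * (wedge g h * wedge (h*g*h⁻¹) (h*h'*h⁻¹))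
  have hB := rel2 (g * g') h h'
  have hB2 := rel1 g g' h
  have f : h * (g * g') * h⁻¹ = (h * g * h⁻¹) * (h * g' * h⁻¹) := by group
  rw [f] at hB
  have hB3 := rel1 (h * g * h⁻¹) (h * g' * h⁻¹) (h * h' * h⁻¹)
  have f1 : h * g * h⁻¹ * (h * g' * h⁻¹) * (h * g * h⁻¹)⁻¹ = h * g * g' * (h * g)⁻¹ := by group
  have f2 : h * g * h⁻¹ * (h * h' * h⁻¹) * (h * g * h⁻¹)⁻¹ = h * g * h' * (h * g)⁻¹ := by group
  rw [f1, f2] at hB3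
  rw [hB3, hB2] at hB
  -- hB : wedge (g*g') (h*h') =
  --   (wedge (g*g'*g⁻¹)(g*h*g⁻¹) * wedge g h) * (Q * wedge (h*g*h⁻¹)(h*h'*h⁻¹))
  have key := hA.symm.trans hB
  simp only [mul_assoc] at key
  have key2 := mul_left_cancel key
  simp only [← mul_assoc] at key2
  exact mul_right_cancel key2

lemma wedge_conj (g h u v : Y) :
    wedge u v * wedge g h
      = wedge g h * wedge (⁅h, g⁆ * u * ⁅h, g⁆⁻¹) (⁅h, g⁆ * v * ⁅h, g⁆⁻¹) := by
  have h1 := wedge_star g h ((g * h)⁻¹ * u * (g * h)) ((g * h)⁻¹ * v * (g * h))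
  have e1 : g * h * ((g * h)⁻¹ * u * (g * h)) * (g * h)⁻¹ = u := by group
  have e2 : g * h * ((g * h)⁻¹ * v * (g * h)) * (g * h)⁻¹ = v := by group
  have e3 : h * g * ((g * h)⁻¹ * u * (g * h)) * (h * g)⁻¹ = ⁅h, g⁆ * u * ⁅h, g⁆⁻¹ := by
    rw [commutatorElement_def]; group
  have e4 : h * g * ((g * h)⁻¹ * v * (g * h)) * (h * g)⁻¹ = ⁅h, g⁆ * v * ⁅h, g⁆⁻¹ := by
    rw [commutatorElement_def]; group
  rw [e1, e2, e3, e4] at h1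
  exact h1

lemma conj_wedge_right (g h u v : Y) :
    (wedge g h)⁻¹ * wedge u v * wedge g h
      = wedge (⁅h, g⁆ * u * ⁅h, g⁆⁻¹) (⁅h, g⁆ * v * ⁅h, g⁆⁻¹) := by
  rw [mul_assoc, wedge_conj g h u v, ← mul_assoc]
  simp

lemma conj_wedge_left (g h u v : Y) :
    wedge g h * wedge u v * (wedge g h)⁻¹
      = wedge (⁅h, g⁆⁻¹ * u * ⁅h, g⁆) (⁅h, g⁆⁻¹ * v * ⁅h, g⁆) := by
  have h1 := wedge_conj g h (⁅h, g⁆⁻¹ * u * ⁅h, g⁆) (⁅h, g⁆⁻¹ * v * ⁅h, g⁆)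
  have e1 : ⁅h, g⁆ * (⁅h, g⁆⁻¹ * u * ⁅h, g⁆) * ⁅h, g⁆⁻¹ = u := by group
  have e2 : ⁅h, g⁆ * (⁅h, g⁆⁻¹ * v * ⁅h, g⁆) * ⁅h, g⁆⁻¹ = v := by group
  rw [e1, e2] at h1
  rw [← h1, mul_inv_cancel_right]

lemma comm_conj {x y : Y} (c : Y) (h : ⁅x, y⁆ = 1) : ⁅c * x * c⁻¹, c * y * c⁻¹⁆ = 1 := by
  rw [← conjugate_commutatorElement, h]
  group

lemma comm_conj' {x y : Y} (c : Y) (h : ⁅x, y⁆ = 1) : ⁅c⁻¹ * x * c, c⁻¹ * y * c⁆ = 1 := by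
  have h2 := comm_conj c⁻¹ h
  rwa [inv_inv] at h2

lemma comm_wedge (x y : Y) : exteriorComm Y (wedge x y) = ⁅x, y⁆ :=
  PresentedGroup.toGroup.of _

lemma M0_le_schur : M0 Y ≤ SchurMultiplier Y := by
  refine (Subgroup.closure_le _).mpr ?_
  rintro z ⟨x, y, hxy, rfl⟩
  show wedge x y ∈ (exteriorComm Y).ker
  rw [MonoidHom.mem_ker, comm_wedge, hxy]

lemma M0_normal : (M0 Y).Normal := by
  have hSconj : ∀ g h : Y, ∀ n ∈ M0 Y,
      wedge g h * n * (wedge g h)⁻¹ ∈ M0 Y ∧ (wedge g h)⁻¹ * n * wedge g h ∈ M0 Y := by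
    intro g h n hn
    induction hn using Subgroup.closure_induction with
    | mem z hz =>
        obtain ⟨x, y, hxy, rfl⟩ := hz
        constructor
        · rw [conj_wedge_left]
          exact Subgroup.subset_closure ⟨_, _, comm_conj' _ hxy, rfl⟩
        · rw [conj_wedge_right]
          exact Subgroup.subset_closure ⟨_, _, comm_conj _ hxy, rfl⟩
    | one =>
        constructor <;>
          · have e : ∀ w : ExteriorSquare Y, w * 1 * w⁻¹ = 1 := by intro w; group
            first
              | (rw [e]; exact Subgroup.one_mem _)
              | (have e2 : ∀ w : ExteriorSquare Y, w⁻¹ * 1 * w = 1 := by intro w; group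
                 rw [e2]; exact Subgroup.one_mem _)
    | mul x y hx hy ihx ihy =>
        constructor
        · have e : wedge g h * (x * y) * (wedge g h)⁻¹
              = (wedge g h * x * (wedge g h)⁻¹) * (wedge g h * y * (wedge g h)⁻¹) := by group
          rw [e]; exact Subgroup.mul_mem _ ihx.1 ihy.1
        · have e : (wedge g h)⁻¹ * (x * y) * wedge g h
              = ((wedge g h)⁻¹ * x * wedge g h) * ((wedge g h)⁻¹ * y * wedge g h) := by group
          rw [e]; exact Subgroup.mul_mem _ ihx.2 ihy.2
    | inv x hx ihx =>
        constructor
        · have e : wedge g h * x⁻¹ * (wedge g h)⁻¹ = (wedge g h * x * (wedge g h)⁻¹)⁻¹ := by group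
          rw [e]; exact Subgroup.inv_mem _ ihx.1
        · have e : (wedge g h)⁻¹ * x⁻¹ * wedge g h = ((wedge g h)⁻¹ * x * wedge g h)⁻¹ := by group
          rw [e]; exact Subgroup.inv_mem _ ihx.2
  let H : Subgroup (ExteriorSquare Y) :=
    { carrier := {w | ∀ n ∈ M0 Y, w * n * w⁻¹ ∈ M0 Y ∧ w⁻¹ * n * w ∈ M0 Y}
      one_mem' := by
        intro n hn
        constructor <;> · simp only [one_mul, inv_one, mul_one]; exact hn
      mul_mem' := by
        intro x y hx hy
        intro n hn
        constructor
        · have e : x * y * n * (x * y)⁻¹ = x * (y * n * y⁻¹) * x⁻¹ := by group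
          rw [e]; exact (hx _ ((hy n hn).1)).1
        · have e : (x * y)⁻¹ * n * (x * y) = y⁻¹ * (x⁻¹ * n * x) * y := by group
          rw [e]; exact (hy _ ((hx n hn).2)).2
      inv_mem' := by
        intro x hx n hn
        constructor
        · have e : x⁻¹ * n * x⁻¹⁻¹ = x⁻¹ * n * x := by group
          rw [e]; exact (hx n hn).2
        · have e : x⁻¹⁻¹ * n * x⁻¹ = x * n * x⁻¹ := by group
          rw [e]; exact (hx n hn).1 }
  have hH : ∀ w : ExteriorSquare Y, w ∈ H := by
    intro w
    exact PresentedGroup.generated_by (exteriorRels Y) H (fun j => hSconj j.1 j.2) w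
  exact ⟨fun n hn w => (hH w n hn).1⟩

lemma main_decomp (s : Y) (A : Subgroup Y) (T : Subgroup (ExteriorSquare Y)) [hTN : T.Normal]
    (hgen : ∀ x : Y, ∃ u ∈ A, ∃ j : ℤ, x = u * s ^ j)
    (hab : ∀ u ∈ A, ∀ v ∈ A, u * v = v * u)
    (hc1 : ∀ u ∈ A, s * u * s⁻¹ ∈ A)
    (hc2 : ∀ u ∈ A, s⁻¹ * u * s ∈ A)
    (hT : ∀ u ∈ A, ∀ v ∈ A, wedge u v ∈ T) :
    ∀ w : ExteriorSquare Y, ∃ u ∈ A, (wedge u s)⁻¹ * w ∈ T := by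
  have hcz : ∀ j : ℤ, ∀ u ∈ A, s ^ j * u * s ^ (-j) ∈ A := by
    intro j
    induction j using Int.induction_on with
    | zero => intro u hu; simpa using hu
    | succ n ih =>
        intro u hu
        have e : s ^ ((n : ℤ) + 1) * u * s ^ (-((n : ℤ) + 1))
            = s * (s ^ (n : ℤ) * u * s ^ (-(n : ℤ))) * s⁻¹ := by group
        rw [e]; exact hc1 _ (ih u hu)
    | pred n ih =>
        intro u hu
        have e : s ^ (-(n : ℤ) - 1) * u * s ^ (-(-(n : ℤ) - 1))
            = s⁻¹ * (s ^ (-(n : ℤ)) * u * s ^ (-(-(n : ℤ)))) * s := by group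
        rw [e]; exact hc2 _ (ih u hu)
  set π : ExteriorSquare Y →* (ExteriorSquare Y ⧸ T) := QuotientGroup.mk' T with hπ
  have hπT : ∀ z : ExteriorSquare Y, π z = 1 ↔ z ∈ T := fun z => QuotientGroup.eq_one_iff z
  have hTone : ∀ u ∈ A, ∀ v ∈ A, π (wedge u v) = 1 := fun u hu v hv =>
    (hπT _).mpr (hT u hu v hv)
  have hom : ∀ u ∈ A, ∀ v ∈ A, π (wedge (u * v) s) = π (wedge v s) * π (wedge u s) := by
    intro u hu v hv
    have h1 := rel1 u v s
    have e1 : u * v * u⁻¹ = v := by rw [hab u hu v hv]; group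
    rw [e1] at h1
    have e2 : u * s * u⁻¹ = s * (s⁻¹ * u * s * u⁻¹) := by group
    rw [e2] at h1
    have h2 := rel2 v s (s⁻¹ * u * s * u⁻¹)
    rw [h2] at h1
    have hz : s⁻¹ * u * s * u⁻¹ ∈ A := mul_mem (hc2 u hu) (inv_mem hu)
    have hz2 : s * (s⁻¹ * u * s * u⁻¹) * s⁻¹ ∈ A := hc1 _ hz
    have hv2 : s * v * s⁻¹ ∈ A := hc1 v hv
    rw [h1, map_mul, map_mul, hTone _ hv2 _ hz2, mul_one]
  let KQ : Subgroup (ExteriorSquare Y ⧸ T) :=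
    { carrier := {q | ∃ u ∈ A, q = π (wedge u s)}
      one_mem' := ⟨1, A.one_mem, by rw [wedge_one_left, map_one]⟩
      mul_mem' := by
        rintro q r ⟨u, hu, rfl⟩ ⟨v, hv, rfl⟩
        exact ⟨v * u, mul_mem hv hu, (hom v hv u hu).symm⟩
      inv_mem' := by
        rintro q ⟨u, hu, rfl⟩
        refine ⟨u⁻¹, inv_mem hu, ?_⟩
        have h0 := hom u hu u⁻¹ (inv_mem hu)
        have e : u * u⁻¹ = 1 := by group
        rw [e, wedge_one_left, map_one] at h0
        exact inv_eq_of_mul_eq_one_left h0.symm }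
  have hwuKQ : ∀ u ∈ A, π (wedge u s) ∈ KQ := fun u hu => ⟨u, hu, rfl⟩
  have hinvs : ∀ u ∈ A, π (wedge u s⁻¹) ∈ KQ := by
    intro u hu
    have hvA : s⁻¹ * u * s ∈ A := hc2 u hu
    have h1 := rel2 (s⁻¹ * u * s) s s⁻¹
    have e1 : s * s⁻¹ = 1 := by group
    have e3 : s * (s⁻¹ * u * s) * s⁻¹ = u := by group
    have e2 : s * s⁻¹ * s⁻¹ = s⁻¹ := by group
    rw [e2, e3, e1, wedge_one_right] at h1
    have h2 : wedge u s⁻¹ = (wedge (s⁻¹ * u * s) s)⁻¹ :=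
      eq_inv_of_mul_eq_one_right h1.symm
    rw [h2, map_inv]
    exact KQ.inv_mem (hwuKQ _ hvA)
  have C1 : ∀ l : ℤ, ∀ u ∈ A, π (wedge u (s ^ l)) ∈ KQ := by
    intro l
    induction l using Int.induction_on with
    | zero => intro u hu; rw [zpow_zero, wedge_one_right, map_one]; exact KQ.one_mem
    | succ n ih =>
        intro u hu
        have e : s ^ ((n : ℤ) + 1) = s * s ^ (n : ℤ) := by group
        rw [e]
        have h1 := rel2 u s (s ^ (n : ℤ))
        have e2 : s * s ^ (n : ℤ) * s⁻¹ = s ^ (n : ℤ) := by group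
        rw [e2] at h1
        rw [h1, map_mul]
        exact KQ.mul_mem (hwuKQ u hu) (ih _ (hc1 u hu))
    | pred n ih =>
        intro u hu
        have e : s ^ (-(n : ℤ) - 1) = s⁻¹ * s ^ (-(n : ℤ)) := by group
        rw [e]
        have h1 := rel2 u s⁻¹ (s ^ (-(n : ℤ)))
        have e2 : s⁻¹ * s ^ (-(n : ℤ)) * s⁻¹⁻¹ = s ^ (-(n : ℤ)) := by group
        rw [e2] at h1
        rw [h1, map_mul]
        refine KQ.mul_mem (hinvs u hu) ?_
        have e3 : s⁻¹ * u * s⁻¹⁻¹ = s⁻¹ * u * s := by group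
        rw [e3]
        exact ih _ (hc2 u hu)
  have Wa : ∀ u ∈ A, ∀ y : Y, π (wedge u y) ∈ KQ := by
    intro u hu y
    obtain ⟨v, hv, l, rfl⟩ := hgen y
    have ev : v * s ^ l = s ^ l * (s ^ (-l) * v * s ^ l) := by group
    rw [ev]
    have h1 := rel2 u (s ^ l) (s ^ (-l) * v * s ^ l)
    rw [h1, map_mul]
    refine KQ.mul_mem (C1 l u hu) ?_
    have m1 : s ^ l * u * (s ^ l)⁻¹ ∈ A := by
      have h := hcz l u hu
      rwa [zpow_neg] at h
    have m2 : s ^ l * (s ^ (-l) * v * s ^ l) * (s ^ l)⁻¹ ∈ A := by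
      have e : s ^ l * (s ^ (-l) * v * s ^ l) * (s ^ l)⁻¹ = v := by group
      rw [e]; exact hv
    rw [hTone _ m1 _ m2]
    exact KQ.one_mem
  have Wb : ∀ j : ℤ, ∀ y : Y, π (wedge (s ^ j) y) ∈ KQ := by
    intro j y
    obtain ⟨v, hv, l, rfl⟩ := hgen y
    have ev : v * s ^ l = s ^ l * (s ^ (-l) * v * s ^ l) := by group
    rw [ev]
    have hv' : s ^ (-l) * v * s ^ l ∈ A := by
      have h := hcz (-l) v hv
      rwa [neg_neg] at h
    have h1 := rel2 (s ^ j) (s ^ l) (s ^ (-l) * v * s ^ l)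
    have e1 : s ^ l * s ^ j * (s ^ l)⁻¹ = s ^ j := by group
    have e2 : s ^ l * (s ^ (-l) * v * s ^ l) * (s ^ l)⁻¹ = v := by group
    rw [e1, e2, wedge_zpow_zpow, one_mul] at h1
    rw [h1, ← wedge_inv, map_inv]
    exact KQ.inv_mem (C1 j v hv)
  have Wall : ∀ x y : Y, π (wedge x y) ∈ KQ := by
    intro x y
    obtain ⟨u, hu, j, rfl⟩ := hgen x
    have ex : u * s ^ j = s ^ j * (s ^ (-j) * u * s ^ j) := by group
    rw [ex]
    have hu' : s ^ (-j) * u * s ^ j ∈ A := by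
      have h := hcz (-j) u hu
      rwa [neg_neg] at h
    have h1 := rel1 (s ^ j) (s ^ (-j) * u * s ^ j) y
    have e1 : s ^ j * (s ^ (-j) * u * s ^ j) * (s ^ j)⁻¹ = u := by group
    rw [e1] at h1
    rw [h1, map_mul]
    exact KQ.mul_mem (Wa u hu _) (Wb j y)
  intro w
  have hw : π w ∈ KQ := by
    refine PresentedGroup.generated_by (exteriorRels Y) (KQ.comap π) ?_ w
    intro jp
    exact Wall jp.1 jp.2
  obtain ⟨u, hu, he⟩ := hw
  refine ⟨u, hu, ?_⟩
  have h1 : π ((wedge u s)⁻¹ * w) = 1 := by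
    rw [map_mul, map_inv, he]
    group
  exact (hπT _).mp h1

end ExtAux
/-- for a finite metacyclic group `G` (an extension of a cyclic group `N`
by a cyclic group), there is `s ∈ G` such that every element of the Schur multiplier is
of the form `x ∧ s` with `x ∈ N`, `[x,s] = 1`; consequently `M(G) = M₀(G)` (i.e. the
Bogomolov multiplier `B₀(G) ≅ Hom(M(G)/M₀(G), ℚ/ℤ)` is trivial), and every central
extension `X` of `G` also has `M(X) = M₀(X)`, i.e. `B₀(X) = 0`. -/
theorem metacyclic_schur_form_and_bogomolov_trivial {G : Type u} [Group G] [Finite G]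
    (N : Subgroup G) [N.Normal] (hN : IsCyclic N) (hQ : IsCyclic (G ⧸ N)) :
    (∃ s : G, ∀ m ∈ SchurMultiplier G, ∃ x ∈ N, ⁅x, s⁆ = 1 ∧ m = wedge x s) ∧
    SchurMultiplier G = M0 G ∧
    (∀ (X : Type u) [Group X] (f : X →* G), Function.Surjective f →
      f.ker ≤ Subgroup.center X → SchurMultiplier X = M0 X) := by
  classical
  obtain ⟨a₀, ha₀⟩ := hN.exists_generator
  obtain ⟨q, hq⟩ := hQ.exists_generator
  obtain ⟨s, hs⟩ := QuotientGroup.mk'_surjective N q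
  have hNa : ∀ x ∈ N, ∃ i : ℤ, x = (a₀ : G) ^ i := by
    intro x hx
    obtain ⟨i, hi⟩ := Subgroup.mem_zpowers_iff.mp (ha₀ ⟨x, hx⟩)
    refine ⟨i, ?_⟩
    have h2 := congrArg (Subtype.val) hi
    simp only [SubgroupClass.coe_zpow] at h2
    exact h2.symm
  have hgenG : ∀ x : G, ∃ u ∈ N, ∃ j : ℤ, x = u * s ^ j := by
    intro x
    obtain ⟨j, hj⟩ := Subgroup.mem_zpowers_iff.mp (hq (QuotientGroup.mk' N x))
    refine ⟨x * (s ^ j)⁻¹, ?_, j, by group⟩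
    have h1 : QuotientGroup.mk' N (x * (s ^ j)⁻¹) = 1 := by
      rw [map_mul, map_inv, map_zpow, hs, hj]
      group
    exact (QuotientGroup.eq_one_iff _).mp h1
  have habN : ∀ u ∈ N, ∀ v ∈ N, u * v = v * u := by
    intro u hu v hv
    obtain ⟨i, rfl⟩ := hNa u hu
    obtain ⟨j, rfl⟩ := hNa v hv
    group
  have hc1G : ∀ u ∈ N, s * u * s⁻¹ ∈ N := fun u hu => ‹N.Normal›.conj_mem u hu s
  have hc2G : ∀ u ∈ N, s⁻¹ * u * s ∈ N := by
    intro u hu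
    have h := ‹N.Normal›.conj_mem u hu s⁻¹
    rwa [inv_inv] at h
  have hTG : ∀ u ∈ N, ∀ v ∈ N, wedge u v ∈ (⊥ : Subgroup (ExteriorSquare G)) := by
    intro u hu v hv
    obtain ⟨i, rfl⟩ := hNa u hu
    obtain ⟨j, rfl⟩ := hNa v hv
    rw [Subgroup.mem_bot]
    exact wedge_zpow_zpow _ i j
  have hmain := main_decomp s N ⊥ hgenG habN hc1G hc2G hTG
  have hform : ∀ w : ExteriorSquare G, ∃ x ∈ N, w = wedge x s := by
    intro w
    obtain ⟨u, hu, hT⟩ := hmain w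
    rw [Subgroup.mem_bot] at hT
    exact ⟨u, hu, (inv_mul_eq_one.mp hT).symm⟩
  have hcommform : ∀ m ∈ SchurMultiplier G, ∃ x ∈ N, ⁅x, s⁆ = 1 ∧ m = wedge x s := by
    intro m hm
    obtain ⟨x, hx, rfl⟩ := hform m
    have hk : exteriorComm G (wedge x s) = 1 := MonoidHom.mem_ker.mp hm
    rw [comm_wedge] at hk
    exact ⟨x, hx, hk, rfl⟩
  refine ⟨⟨s, hcommform⟩, ?_, ?_⟩
  · apply le_antisymm
    · intro m hm
      obtain ⟨x, hx, hc, rfl⟩ := hcommform m hm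
      exact Subgroup.subset_closure ⟨x, s, hc, rfl⟩
    · exact M0_le_schur
  · intro X _ f hfs hfc
    obtain ⟨ta, hta⟩ := hfs (a₀ : G)
    obtain ⟨ts, hts⟩ := hfs s
    have hcen : ∀ z ∈ f.ker, ∀ x : X, z * x = x * z := by
      intro z hz x
      exact (Subgroup.mem_center_iff.mp (hfc hz) x).symm
    have hprod : ∀ (i i' : ℤ) (z z' : X), z ∈ f.ker →
        (ta ^ i * z) * (ta ^ i' * z') = ta ^ (i + i') * (z * z') := by
      intro i i' z z' hz
      rw [zpow_add]
      calc ta ^ i * z * (ta ^ i' * z') = ta ^ i * (z * ta ^ i') * z' := by group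
        _ = ta ^ i * (ta ^ i' * z) * z' := by rw [hcen z hz]
        _ = ta ^ i * ta ^ i' * (z * z') := by group
    let AX : Subgroup X :=
      { carrier := {x | ∃ i : ℤ, ∃ z ∈ f.ker, x = ta ^ i * z}
        one_mem' := ⟨0, 1, f.ker.one_mem, by simp⟩
        mul_mem' := by
          rintro x y ⟨i, z, hz, rfl⟩ ⟨i', z', hz', rfl⟩
          exact ⟨i + i', z * z', mul_mem hz hz', hprod i i' z z' hz⟩
        inv_mem' := by
          rintro x ⟨i, z, hz, rfl⟩
          refine ⟨-i, z⁻¹, inv_mem hz, ?_⟩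
          rw [zpow_neg, mul_inv_rev, hcen z⁻¹ (inv_mem hz) (ta ^ i)⁻¹] }
    have hkerAX : ∀ z ∈ f.ker, z ∈ AX := fun z hz => ⟨0, z, hz, by simp⟩
    have habX : ∀ u ∈ AX, ∀ v ∈ AX, u * v = v * u := by
      rintro u ⟨i, z, hz, rfl⟩ v ⟨i', z', hz', rfl⟩
      rw [hprod i i' z z' hz, hprod i' i z' z hz', add_comm i' i, hcen z hz z']
    have hgenX : ∀ x : X, ∃ u ∈ AX, ∃ j : ℤ, x = u * ts ^ j := by
      intro x
      obtain ⟨u, hu, j, hx⟩ := hgenG (f x)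
      obtain ⟨i, hui⟩ := hNa u hu
      refine ⟨ta ^ i * (ta ^ (-i) * (x * ts ^ (-j))), ⟨i, _, ?_, rfl⟩, j, by group⟩
      rw [MonoidHom.mem_ker, map_mul, map_mul, map_zpow, map_zpow, hta, hts, hx, hui]
      group
    have hmemN : ∀ c : X, f c ∈ N → c ∈ AX := by
      intro c hc
      obtain ⟨m, hm⟩ := hNa (f c) hc
      refine ⟨m, ta ^ (-m) * c, ?_, by group⟩
      rw [MonoidHom.mem_ker, map_mul, map_zpow, hta, hm]
      group
    have hconj_gen : ∀ c : X, c * ta * c⁻¹ ∈ AX → ∀ u ∈ AX, c * u * c⁻¹ ∈ AX := by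
      intro c hcta u hu
      obtain ⟨i, z, hz, rfl⟩ := hu
      have e : c * (ta ^ i * z) * c⁻¹ = (c * ta * c⁻¹) ^ i * z := by
        rw [conj_zpow]
        calc c * (ta ^ i * z) * c⁻¹ = c * ta ^ i * (z * c⁻¹) := by group
          _ = c * ta ^ i * (c⁻¹ * z) := by rw [hcen z hz]
          _ = c * ta ^ i * c⁻¹ * z := by group
      rw [e]
      exact mul_mem (zpow_mem hcta i) (hkerAX z hz)
    have hts1 : ts * ta * ts⁻¹ ∈ AX := by
      refine hmemN _ ?_
      rw [map_mul, map_mul, map_inv, hta, hts]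
      exact hc1G _ a₀.2
    have hts2 : ts⁻¹ * ta * ts⁻¹⁻¹ ∈ AX := by
      rw [inv_inv]
      refine hmemN _ ?_
      rw [map_mul, map_mul, map_inv, hta, hts]
      exact hc2G _ a₀.2
    have hc1X : ∀ u ∈ AX, ts * u * ts⁻¹ ∈ AX := hconj_gen ts hts1
    have hc2X : ∀ u ∈ AX, ts⁻¹ * u * ts ∈ AX := by
      intro u hu
      have h := hconj_gen ts⁻¹ hts2 u hu
      rwa [inv_inv] at h
    have hTX : ∀ u ∈ AX, ∀ v ∈ AX, wedge u v ∈ M0 X := fun u hu v hv =>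
      Subgroup.subset_closure
        ⟨u, v, commutatorElement_eq_one_iff_mul_comm.mpr (habX u hu v hv), rfl⟩
    haveI : (M0 X).Normal := M0_normal
    have hmainX := main_decomp ts AX (M0 X) hgenX habX hc1X hc2X hTX
    apply le_antisymm
    · intro m hm
      obtain ⟨w, hw, ht⟩ := hmainX m
      have hkt : exteriorComm X ((wedge w ts)⁻¹ * m) = 1 := MonoidHom.mem_ker.mp (M0_le_schur ht)
      have hkm : exteriorComm X m = 1 := MonoidHom.mem_ker.mp hm
      rw [map_mul, map_inv, comm_wedge, hkm, mul_one] at hkt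
      have hcom : ⁅w, ts⁆ = 1 := inv_eq_one.mp hkt
      have hws : wedge w ts ∈ M0 X := Subgroup.subset_closure ⟨w, ts, hcom, rfl⟩
      have e : m = wedge w ts * ((wedge w ts)⁻¹ * m) := by group
      rw [e]
      exact mul_mem hws ht
    · exact M0_le_schur
end
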